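/- arXiv:2412.09120 — 2 statements merged into one kernel-verified Lean document; each statement's English description precedes it below -/
import Mathlib

section
/- Let λ = (λ_1, …, λ_p) be a partition of r, let d ∈ {1, …, p}, and define a new partition λ~ = (λ~_1, …, λ~_{p−d+1}) of r by λ~_1 = λ_1 + … + λ_d and λ~_t = λ_{t+d−1} for 2 ≤ t ≤ p−d+1. Then for every j ∈ {1, …, r} and m ∈ ℤ, the pair (j, m) is non-negative of level d with respect to λ if and only if m ≥ 1 − λ~(j), where λ~(j) = min{t : λ~_1 + … + λ~_t ≥ j}. -/
/-!
Write `L = λ(j)`. In a decomposition `(j_k, m_k)` with no positive `m_k`, the support of `j_•`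
has at least `L` elements, since any `L - 1` parts of the antitone `λ` sum to at most
`μ_{L-1} < j`; each negative `m_k` is at most `-1` and lies in the support, so at most `-m` of
the support entries have `m_k ≠ 0`, leaving at least `L + m` zeros. Conversely, filling `j`
greedily into the first `L` parts and spreading `m` as negative entries over the first
`min L (-m)` of them attains this bound. Hence `(j, m)` is non-negative of level `d` iff
`m ≥ min 0 (d - L)`. Finally the partial sums of `λ~` are `μ_{t+d-1}`, so
`λ~(j) = max 1 (L - d + 1)`.
-/

open Finset

/-- The partial sums `μ_t = λ_1 + ⋯ + λ_t` of a tuple `λ : Fin p → ℕ`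
(with `μ_0 = 0`); on the Lean side `partialSum lam t = ∑_{i < t} λ_i`
with `0`-based indexing of `λ`. -/
def partialSum {p : ℕ} (lam : Fin p → ℕ) (t : ℕ) : ℕ :=
  ∑ i ∈ univ.filter (fun i : Fin p => (i : ℕ) < t), lam i

/-- `λ(j) = min { t : μ_t ≥ j }` (for `1 ≤ j ≤ r` this minimum lies in `{1, …, p}`). -/
noncomputable def lamIdx {p : ℕ} (lam : Fin p → ℕ) (j : ℕ) : ℕ :=
  sInf {t : ℕ | j ≤ partialSum lam t}

/-- The pair `(j, m)` is non-negative of level `d` with respect to `λ`: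
either `m ≥ 0`, or for every pair of tuples `(j_1, …, j_p) ∈ ℕ^p`, `(m_1, …, m_p) ∈ ℤ^p`
with `j_k ≤ λ_k`, `Σ j_k = j`, `Σ m_k = m` and `m_k = 0` whenever `j_k = 0`,
either some `m_k > 0`, or there are at least `d` indices `k` with `m_k = 0` and `j_k > 0`. -/
def NonNegOfLevel {p : ℕ} (lam : Fin p → ℕ) (d : ℕ) (j : ℕ) (m : ℤ) : Prop :=
  0 ≤ m ∨
    ∀ (jv : Fin p → ℕ) (mv : Fin p → ℤ),
      (∀ k, jv k ≤ lam k) → (∑ k, jv k) = j → (∑ k, mv k) = m →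
      (∀ k, jv k = 0 → mv k = 0) →
      ((∃ k, 0 < mv k) ∨
        d ≤ (univ.filter (fun k => mv k = 0 ∧ 0 < jv k)).card)

section PartialSum

variable {p : ℕ} (lam : Fin p → ℕ)

lemma partialSum_zero : partialSum lam 0 = 0 := by
  simp [partialSum]

lemma partialSum_succ (t : ℕ) :
    partialSum lam (t + 1) = partialSum lam t + if h : t < p then lam ⟨t, h⟩ else 0 := by
  unfold partialSum
  split_ifs with ht
  · rw [show univ.filter (fun i : Fin p => (i : ℕ) < t + 1) =
        insert ⟨t, ht⟩ (univ.filter fun i : Fin p => (i : ℕ) < t) by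
      ext i; simp [Fin.ext_iff]; omega, sum_insert (by simp), add_comm]
  · rw [add_zero]
    refine sum_congr (filter_congr fun i _ => ?_) fun _ _ => rfl
    have := i.isLt
    omega

lemma partialSum_of_le {t : ℕ} (ht : p ≤ t) : partialSum lam t = ∑ k, lam k := by
  unfold partialSum
  rw [filter_true_of_mem fun i _ => i.isLt.trans_le ht]

lemma partialSum_mono : Monotone (partialSum lam) :=
  fun _ _ hab => sum_le_sum_of_subset fun i => by simp only [mem_filter, mem_univ, true_and]; omega

lemma lamIdx_le_of_le_partialSum {j t : ℕ} (h : j ≤ partialSum lam t) : lamIdx lam j ≤ t :=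
  Nat.sInf_le h

lemma lamIdx_le_iff {j t : ℕ} (hj : j ≤ ∑ k, lam k) :
    lamIdx lam j ≤ t ↔ j ≤ partialSum lam t := by
  refine ⟨fun h => ?_, lamIdx_le_of_le_partialSum lam⟩
  have hne : {t : ℕ | j ≤ partialSum lam t}.Nonempty :=
    ⟨p, (partialSum_of_le lam le_rfl).ge.trans' hj⟩
  exact (Nat.sInf_mem hne).trans (partialSum_mono lam h)

lemma sum_le_partialSum_card (hanti : Antitone lam) (S : Finset (Fin p)) :
    ∑ k ∈ S, lam k ≤ partialSum lam #S := by
  induction S using Finset.induction_on_max with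
  | empty => simp [partialSum_zero]
  | insert a s ha ih =>
    have ha' : a ∉ s := fun h => lt_irrefl a (ha a h)
    have hcard : #s ≤ a := Fin.card_Iio a ▸ card_le_card fun x hx => mem_Iio.2 (ha x hx)
    have hcp : #s < p := hcard.trans_lt a.isLt
    rw [sum_insert ha', card_insert_of_notMem ha', partialSum_succ, dif_pos hcp]
    have : lam a ≤ lam ⟨#s, hcp⟩ := hanti (Fin.le_def.2 hcard)
    omega

end PartialSum

lemma partialSum_merge {p d : ℕ} (lam : Fin p → ℕ) (tlam : Fin (p - d + 1) → ℕ)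
    (h0 : ∀ t : Fin (p - d + 1), (t : ℕ) = 0 → tlam t = partialSum lam d)
    (h1 : ∀ t : Fin (p - d + 1), ∀ _ : 1 ≤ (t : ℕ),
      tlam t = lam ⟨(t : ℕ) + d - 1, by have := t.isLt; omega⟩)
    {t : ℕ} (ht : 1 ≤ t) : partialSum tlam t = partialSum lam (t + d - 1) := by
  induction t, ht using Nat.le_induction with
  | base =>
    rw [partialSum_succ, partialSum_zero, dif_pos (Nat.succ_pos _), h0 ⟨0, _⟩ rfl]
    simp
  | succ t ht ih =>
    rw [partialSum_succ, ih, show t + 1 + d - 1 = t + d - 1 + 1 by omega, partialSum_succ]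
    by_cases htp : t < p - d + 1
    · rw [dif_pos htp, dif_pos (by omega), h1 ⟨t, htp⟩ ht]
    · rw [dif_neg htp, dif_neg (by omega)]

lemma lamIdx_merge {p d : ℕ} (lam : Fin p → ℕ) (tlam : Fin (p - d + 1) → ℕ)
    (h0 : ∀ t : Fin (p - d + 1), (t : ℕ) = 0 → tlam t = partialSum lam d)
    (h1 : ∀ t : Fin (p - d + 1), ∀ _ : 1 ≤ (t : ℕ),
      tlam t = lam ⟨(t : ℕ) + d - 1, by have := t.isLt; omega⟩)
    {j : ℕ} (hj1 : 1 ≤ j) (hj : j ≤ ∑ k, lam k) :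
    lamIdx tlam j = max 1 (lamIdx lam j + 1 - d) := by
  have htotal : ∑ k, tlam k = ∑ k, lam k := by
    rw [← partialSum_of_le tlam le_rfl, partialSum_merge lam tlam h0 h1 (by omega),
      partialSum_of_le lam (by omega)]
  refine eq_of_forall_ge_iff fun c => ?_
  rw [lamIdx_le_iff tlam (htotal ▸ hj)]
  rcases Nat.eq_zero_or_pos c with rfl | hc
  · simp only [partialSum_zero]
    omega
  · rw [partialSum_merge lam tlam h0 h1 hc, ← lamIdx_le_iff lam hj]
    omega

section GreedyFill

variable {p : ℕ} (lam : Fin p → ℕ) (j : ℕ)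

def greedyFill (k : Fin p) : ℕ :=
  min (lam k) (j - partialSum lam k)

lemma greedyFill_le (k : Fin p) : greedyFill lam j k ≤ lam k :=
  min_le_left _ _

lemma partialSum_greedyFill (t : ℕ) :
    partialSum (greedyFill lam j) t = min j (partialSum lam t) := by
  induction t with
  | zero => simp [partialSum_zero]
  | succ t ih =>
    rw [partialSum_succ, partialSum_succ, ih]
    split_ifs
    · simp only [greedyFill]
      omega
    · simp

variable {lam j}

lemma sum_greedyFill (hj : j ≤ ∑ k, lam k) : ∑ k, greedyFill lam j k = j := by
  rw [← partialSum_of_le _ le_rfl, partialSum_greedyFill, partialSum_of_le _ le_rfl,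
    min_eq_left hj]

lemma greedyFill_pos_iff (hpos : ∀ k, 1 ≤ lam k) (hj : j ≤ ∑ k, lam k) (k : Fin p) :
    0 < greedyFill lam j k ↔ (k : ℕ) < lamIdx lam j := by
  rw [← not_iff_not, not_lt, not_lt, lamIdx_le_iff lam hj]
  have := hpos k
  simp only [greedyFill]
  omega

end GreedyFill

lemma card_filter_neg_le_neg_sum {ι : Type*} [Fintype ι] (f : ι → ℤ) (hf : ∀ k, f k ≤ 0) :
    (#{k | f k < 0} : ℤ) ≤ -∑ k, f k := by
  rw [← sum_filter_of_ne fun k _ h => (hf k).lt_of_ne h]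
  have := card_nsmul_le_sum {k | f k < 0} (-f) 1 fun k hk => by
    simp only [mem_filter, mem_univ, true_and] at hk
    simp only [Pi.neg_apply]
    omega
  simpa using this

lemma exists_sum_eq_of_neg_on {ι : Type*} [Fintype ι] [DecidableEq ι] {S : Finset ι}
    (hS : S.Nonempty) {m : ℤ} (hm : m + #S ≤ 0) :
    ∃ mv : ι → ℤ, ∑ k, mv k = m ∧ (∀ k ∈ S, mv k < 0) ∧ ∀ k ∉ S, mv k = 0 := by
  obtain ⟨a, ha⟩ := hS
  refine ⟨fun k => (if k ∈ S then -1 else 0) + if k = a then m + #S else 0, ?_, ?_, ?_⟩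
  · simp [sum_add_distrib]
  · intro k hk
    simp only [hk, if_true]
    split_ifs <;> omega
  · intro k hk
    have : k ≠ a := ne_of_mem_of_not_mem ha hk |>.symm
    simp [hk, this]

section NonNegOfLevel

variable {p : ℕ} (lam : Fin p → ℕ) {d j : ℕ} {m : ℤ}

lemma nonNegOfLevel_of_le (hanti : Antitone lam) (hm : min 0 ((d : ℤ) - lamIdx lam j) ≤ m) :
    NonNegOfLevel lam d j m := by
  refine (le_or_gt 0 m).imp id fun hm0 jv mv hle hjsum hmsum hzero => ?_
  refine or_iff_not_imp_left.2 fun hnopos => ?_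
  simp only [not_exists, not_lt] at hnopos
  have hNS : univ.filter (fun k => mv k < 0) ⊆ univ.filter (fun k => 0 < jv k) := fun k => by
    simp only [mem_filter, mem_univ, true_and]
    exact fun hk => Nat.pos_of_ne_zero fun h => (hzero k h ▸ hk).false
  have hZ : univ.filter (fun k => mv k = 0 ∧ 0 < jv k) =
      univ.filter (fun k => 0 < jv k) \ univ.filter (fun k => mv k < 0) := by
    ext k
    have := hnopos k
    simp only [mem_filter, mem_univ, true_and, mem_sdiff]
    omega
  have hsupp : lamIdx lam j ≤ #{k | 0 < jv k} := by
    refine lamIdx_le_of_le_partialSum lam ?_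
    calc j = ∑ k ∈ {k | 0 < jv k}, jv k := by
          rw [← hjsum, sum_filter_of_ne fun k _ h => Nat.pos_of_ne_zero h]
      _ ≤ ∑ k ∈ {k | 0 < jv k}, lam k := sum_le_sum fun k _ => hle k
      _ ≤ _ := sum_le_partialSum_card lam hanti _
  have hneg := card_filter_neg_le_neg_sum mv hnopos
  rw [hZ, card_sdiff_of_subset hNS]
  have := card_le_card hNS
  omega

lemma not_nonNegOfLevel (hpos : ∀ k, 1 ≤ lam k) (hd : 1 ≤ d) (hj1 : 1 ≤ j)
    (hj : j ≤ ∑ k, lam k) (hm : m < min 0 ((d : ℤ) - lamIdx lam j)) :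
    ¬ NonNegOfLevel lam d j m := by
  set L := lamIdx lam j
  have hL1 : 1 ≤ L := by
    by_contra h
    have := (lamIdx_le_iff lam hj).1 (show L ≤ 0 by omega)
    rw [partialSum_zero] at this
    omega
  have hLp : L ≤ p := (lamIdx_le_iff lam hj).2 ((partialSum_of_le lam le_rfl).ge.trans' hj)
  obtain ⟨n, rfl⟩ : ∃ n : ℕ, m = -n := ⟨m.natAbs, by omega⟩
  set S : Finset (Fin p) := {k | (k : ℕ) < min L n}
  have hS : #S = min L n := by
    simp only [S, Fin.card_filter_val_lt]
    omega
  obtain ⟨mv, hmsum, hneg, hzero⟩ :=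
    exists_sum_eq_of_neg_on (S := S) (card_pos.1 (by omega)) (m := -n) (by omega)
  have hsupp (k : Fin p) : 0 < greedyFill lam j k ↔ (k : ℕ) < L := greedyFill_pos_iff hpos hj k
  rintro (h | h)
  · omega
  obtain ⟨k, hk⟩ | hcard := h (greedyFill lam j) mv (greedyFill_le lam j) (sum_greedyFill hj)
    hmsum fun k hk => hzero k fun hkS => by
      simp only [S, mem_filter, mem_univ, true_and] at hkS
      exact (hsupp k).2 (by omega) |>.ne' hk
  · by_cases hkS : k ∈ S
    · exact (hneg k hkS).not_gt hk
    · exact hk.ne' (hzero k hkS)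
  · have hsub : univ.filter (fun k => mv k = 0 ∧ 0 < greedyFill lam j k) ⊆
        univ.filter (fun k : Fin p => (k : ℕ) < L) \ S := fun k => by
      simp only [mem_filter, mem_univ, true_and, mem_sdiff, hsupp]
      exact fun ⟨h0, hk⟩ => ⟨hk, fun hkS => (hneg k hkS).ne h0⟩
    have hSL : S ⊆ univ.filter (fun k : Fin p => (k : ℕ) < L) := fun k => by
      simp only [S, mem_filter, mem_univ, true_and]
      omega
    have := card_le_card hsub
    rw [card_sdiff_of_subset hSL, hS, Fin.card_filter_val_lt] at this
    omega

theorem nonNegOfLevel_iff (hpos : ∀ k, 1 ≤ lam k) (hanti : Antitone lam) (hd : 1 ≤ d)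
    (hj1 : 1 ≤ j) (hj : j ≤ ∑ k, lam k) :
    NonNegOfLevel lam d j m ↔ min 0 ((d : ℤ) - lamIdx lam j) ≤ m :=
  ⟨fun h => not_lt.1 fun hm => not_nonNegOfLevel lam hpos hd hj1 hj hm h,
    nonNegOfLevel_of_le lam hanti⟩

end NonNegOfLevel

/-- For the new partition `λ~ = (μ_d, λ_{d+1}, …, λ_p)` of `r`, the pair `(j, m)` is
non-negative of level `d` with respect to `λ` if and only if `m ≥ 1 − λ~(j)`.
Here `tlam : Fin (p - d + 1) → ℕ` is `λ~` with `0`-based indexing: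
`tlam 0 = μ_d` and `tlam t = λ_{t + d}` (1-based `λ`-index) for `t ≥ 1`. -/
theorem stmt2 (r p : ℕ) (lam : Fin p → ℕ)
    (hpos : ∀ k, 1 ≤ lam k) (hanti : ∀ k l : Fin p, k ≤ l → lam l ≤ lam k)
    (hsum : ∑ k, lam k = r)
    (d : ℕ) (hd1 : 1 ≤ d)
    (tlam : Fin (p - d + 1) → ℕ)
    (htlam0 : ∀ t : Fin (p - d + 1), (t : ℕ) = 0 → tlam t = partialSum lam d)
    (htlam1 : ∀ t : Fin (p - d + 1), ∀ _ : 1 ≤ (t : ℕ),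
      tlam t = lam ⟨(t : ℕ) + d - 1, by have := t.isLt; omega⟩)
    (j : ℕ) (hj1 : 1 ≤ j) (hjr : j ≤ r) (m : ℤ) :
    NonNegOfLevel lam d j m ↔ 1 - (lamIdx tlam j : ℤ) ≤ m := by
  have hj : j ≤ ∑ k, lam k := hsum ▸ hjr
  rw [nonNegOfLevel_iff lam hpos (fun k l h => hanti k l h) hd1 hj1 hj,
    lamIdx_merge lam tlam htlam0 htlam1 hj1 hj]
  omega
end

section
/- Fix integers r ≥ 2 and s with 1 ≤ s ≤ r, let z be a nonzero complex number, and let θ = exp(2πi/r). Define the r×r complex matrix V(z) by V(z)_{k,j} = z^{−r⌊α_{r+1−k}⌋} · (θ^{j} z^{s−r})^{k} for k ∈ {1, …, r} and j ∈ {0, 1, …, r−1}. Then M(z)·V(z) = V(z)·diag(θ^0 z^{s−r}, θ^1 z^{s−r}, …, θ^{r−1} z^{s−r}), and V(z) is invertible; consequently M(z) = V(z)·diag(θ^j z^{s−r})·V(z)^{−1}. -/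
open Finset Matrix

/-- `⌊α_k⌋ = ⌊k(r−s)/r⌋`. -/
noncomputable def alphaFloor (r s k : ℕ) : ℤ :=
  ⌊((k : ℚ) * ((r : ℚ) - (s : ℚ))) / (r : ℚ)⌋

/-- The Higgs matrix `M(z)` of the `(r,s)` quantum curve: the `r × r` complex matrix
with `M(z)_{k,k+1} = z^{r(⌊α_{r−k}⌋ − ⌊α_{r+1−k}⌋)}` for `1 ≤ k ≤ r−1`,
`M(z)_{r,1} = z^{−r⌊α_1⌋}`, and all other entries `0` (indices `0`-based in Lean). -/
noncomputable def higgs (r s : ℕ) (z : ℂ) : Matrix (Fin r) (Fin r) ℂ :=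
  Matrix.of fun i j =>
    if (i : ℕ) + 1 = (j : ℕ) then
      z ^ ((r : ℤ) * (alphaFloor r s (r - 1 - (i : ℕ)) - alphaFloor r s (r - (i : ℕ))))
    else if (i : ℕ) = r - 1 ∧ (j : ℕ) = 0 then
      z ^ (-(r : ℤ) * alphaFloor r s 1)
    else 0

/-- The eigenvector matrix `V(z)_{k,j} = z^{−r⌊α_{r+1−k}⌋} (θ^j z^{s−r})^k`
for `k ∈ {1, …, r}` (row index `0`-based in Lean, so row `i` is `k = i + 1`)
and `j ∈ {0, …, r−1}`, where `θ = exp(2πi/r)`. -/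
noncomputable def eigV (r s : ℕ) (z : ℂ) : Matrix (Fin r) (Fin r) ℂ :=
  Matrix.of fun i j =>
    z ^ (-(r : ℤ) * alphaFloor r s (r - (i : ℕ))) *
      (Complex.exp (2 * Real.pi * Complex.I / r) ^ (j : ℕ) * z ^ ((s : ℤ) - (r : ℤ))) ^
        ((i : ℕ) + 1)

lemma alphaFloor_self (r s : ℕ) (hr : r ≠ 0) : alphaFloor r s r = (r : ℤ) - s := by
  unfold alphaFloor
  rw [mul_comm, mul_div_assoc, div_self (by exact_mod_cast hr : (r:ℚ) ≠ 0), mul_one,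
    show ((r:ℚ) - (s:ℚ)) = (((r:ℤ) - (s:ℤ) : ℤ) : ℚ) by push_cast; ring, Int.floor_intCast]

/-- `M(z)·V(z) = V(z)·diag(θ^j z^{s−r})`, `V(z)` is invertible, and consequently
`M(z) = V(z)·diag(θ^j z^{s−r})·V(z)⁻¹`. -/
theorem stmt17 (r s : ℕ) (hr : 2 ≤ r) (hs1 : 1 ≤ s) (hsr : s ≤ r)
    (z : ℂ) (hz : z ≠ 0) :
    higgs r s z * eigV r s z =
        eigV r s z * Matrix.diagonal
          (fun j : Fin r =>
            Complex.exp (2 * Real.pi * Complex.I / r) ^ (j : ℕ) * z ^ ((s : ℤ) - (r : ℤ)))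
      ∧ IsUnit (eigV r s z)
      ∧ higgs r s z =
          eigV r s z * Matrix.diagonal
              (fun j : Fin r =>
                Complex.exp (2 * Real.pi * Complex.I / r) ^ (j : ℕ) *
                  z ^ ((s : ℤ) - (r : ℤ))) *
            (eigV r s z)⁻¹ := by
  set θ : ℂ := Complex.exp (2 * Real.pi * Complex.I / r) with hθdef
  have hθ : IsPrimitiveRoot θ r := Complex.isPrimitiveRoot_exp r (by omega)
  set w : Fin r → ℂ := fun j => θ ^ (j : ℕ) * z ^ ((s : ℤ) - (r : ℤ)) with hwdef
  have hwne : ∀ j, w j ≠ 0 := fun j =>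
    mul_ne_zero (pow_ne_zero _ (Complex.exp_ne_zero _)) (zpow_ne_zero _ hz)
  -- first part
  have h1 : higgs r s z * eigV r s z = eigV r s z * Matrix.diagonal w := by
    ext i j
    rw [Matrix.mul_apply, Matrix.mul_diagonal]
    by_cases hi : (i : ℕ) + 1 < r
    · rw [Finset.sum_eq_single (⟨(i : ℕ) + 1, hi⟩ : Fin r)]
      · have he : higgs r s z i ⟨(i : ℕ) + 1, hi⟩ =
            z ^ ((r : ℤ) * (alphaFloor r s (r - 1 - (i : ℕ)) - alphaFloor r s (r - (i : ℕ)))) := by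
          simp [higgs]
        have hnat : r - ((i : ℕ) + 1) = r - 1 - (i : ℕ) := by omega
        rw [he]
        show _ * (z ^ (-(r : ℤ) * alphaFloor r s (r - ((i : ℕ) + 1))) * w j ^ ((i : ℕ) + 1 + 1))
          = z ^ (-(r : ℤ) * alphaFloor r s (r - (i : ℕ))) * w j ^ ((i : ℕ) + 1) * w j
        rw [hnat]
        set a := alphaFloor r s (r - 1 - (i : ℕ))
        set b := alphaFloor r s (r - (i : ℕ))
        have key : z ^ ((r : ℤ) * (a - b)) * z ^ (-(r : ℤ) * a) = z ^ (-(r : ℤ) * b) := by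
          rw [← zpow_add₀ hz]; congr 1; ring
        rw [← key, pow_succ]; ring
      · intro b _ hb
        have : ¬ ((i : ℕ) + 1 = (b : ℕ)) := fun h => hb (by ext; simpa using h.symm)
        have : higgs r s z i b = 0 := by
          simp only [higgs, Matrix.of_apply, if_neg this, ite_eq_right_iff]
          intro ⟨h1, _⟩; omega
        rw [this, zero_mul]
      · intro h; exact absurd (Finset.mem_univ _) h
    · have hieq : (i : ℕ) = r - 1 := by have := i.isLt; omega
      rw [Finset.sum_eq_single (⟨0, by omega⟩ : Fin r)]
      · have he : higgs r s z i ⟨0, by omega⟩ = z ^ (-(r : ℤ) * alphaFloor r s 1) := by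
          simp [higgs, hieq]
        rw [he]
        show _ * (z ^ (-(r : ℤ) * alphaFloor r s (r - (0 : ℕ))) * w j ^ ((0 : ℕ) + 1))
          = z ^ (-(r : ℤ) * alphaFloor r s (r - (i : ℕ))) * w j ^ ((i : ℕ) + 1) * w j
        have hri : r - (i : ℕ) = 1 := by omega
        rw [hri, Nat.sub_zero, alphaFloor_self r s (by omega), pow_one]
        have hwr : w j ^ r = z ^ (-(r : ℤ) * ((r : ℤ) - (s : ℤ))) := by
          rw [hwdef]
          show (θ ^ (j : ℕ) * z ^ ((s : ℤ) - (r : ℤ))) ^ r = _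
          rw [mul_pow, ← pow_mul, mul_comm (j : ℕ) r, pow_mul, hθ.pow_eq_one, one_pow, one_mul,
            ← zpow_natCast (z ^ ((s : ℤ) - (r : ℤ))), ← _root_.zpow_mul]
          congr 1; ring
        have hip : (i : ℕ) + 1 = r := by omega
        rw [hip, hwr]; ring
      · intro b _ hb
        have hb0 : ¬ ((b : ℕ) = 0) := fun h => hb (by ext; simpa using h)
        have : higgs r s z i b = 0 := by
          have hblt := b.isLt
          simp only [higgs, Matrix.of_apply]
          split_ifs with hc1 hc2
          · omega
          · exact absurd hc2.2 hb0
          · rfl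
        rw [this, zero_mul]
      · intro h; exact absurd (Finset.mem_univ _) h
  -- invertibility
  have hwinj : Function.Injective w := by
    intro a b hab
    have h' : θ ^ (a : ℕ) = θ ^ (b : ℕ) := mul_right_cancel₀ (zpow_ne_zero _ hz) hab
    exact Fin.ext (hθ.pow_inj a.isLt b.isLt h')
  set d : Fin r → ℂ := fun i => z ^ (-(r : ℤ) * alphaFloor r s (r - (i : ℕ))) with hd
  have hV : eigV r s z = Matrix.diagonal d * (Matrix.vandermonde w)ᵀ * Matrix.diagonal w := by
    ext i j
    rw [Matrix.mul_diagonal, Matrix.diagonal_mul, Matrix.transpose_apply, Matrix.vandermonde_apply]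
    show z ^ (-(r : ℤ) * alphaFloor r s (r - (i : ℕ))) * w j ^ ((i : ℕ) + 1) = d i * w j ^ (i : ℕ) * w j
    rw [pow_succ]; ring
  have hdet : (eigV r s z).det ≠ 0 := by
    rw [hV, Matrix.det_mul, Matrix.det_mul, Matrix.det_diagonal, Matrix.det_transpose,
      Matrix.det_diagonal]
    refine mul_ne_zero (mul_ne_zero ?_ ?_) ?_
    · exact Finset.prod_ne_zero_iff.mpr fun i _ => zpow_ne_zero _ hz
    · exact Matrix.det_vandermonde_ne_zero_iff.mpr hwinj
    · exact Finset.prod_ne_zero_iff.mpr fun j _ => hwne j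
  have hU : IsUnit (eigV r s z) :=
    (Matrix.isUnit_iff_isUnit_det _).mpr (isUnit_iff_ne_zero.mpr hdet)
  refine ⟨h1, hU, ?_⟩
  have h2 : eigV r s z * (eigV r s z)⁻¹ = 1 :=
    Matrix.mul_nonsing_inv _ (isUnit_iff_ne_zero.mpr hdet)
  calc higgs r s z = higgs r s z * (eigV r s z * (eigV r s z)⁻¹) := by rw [h2, mul_one]
    _ = higgs r s z * eigV r s z * (eigV r s z)⁻¹ := by rw [mul_assoc]
    _ = _ := by rw [h1]
end
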